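/- Any element g of G₂' = Aut(𝕆') that preserves the splitting Im(𝕆') = Im(ℍ') ⊕ ℍ'ℓ is uniquely determined by its restriction g₂ to ℍ'ℓ: the restriction g₁ to Im(ℍ') is determined via g₁(j) = g(ℓ) × g(jℓ), g₁(δ) = g(ℓ) × g(δℓ), g₁(ε) = g(ℓ) × g(εℓ), using the identities j = ℓ × jℓ, δ = ℓ × δℓ, ε = ℓ × εℓ. -/
import Mathlib


open scoped Quaternion

noncomputable section

/-- The split quaternions: `j² = -1`, `δ² = ε² = 1`, `j·δ = -δ·j = ε`
(realized as `i, j, k` in `ℍ[ℝ, -1, 1]`). -/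
abbrev H' : Type := ℍ[ℝ, -1, 1]

/-- The split octonions, as pairs of split quaternions (Cayley–Dickson doubling). -/
abbrev SplitOct : Type := H' × H'

namespace SplitOct

/-- Split octonion multiplication:
`(x₁,y₁)·(x₂,y₂) = (x₁x₂ - ȳ₂y₁, y₂x₁ + y₁x̄₂)`. -/
def omul (z w : SplitOct) : SplitOct :=
  (z.1 * w.1 - star w.2 * z.2, w.2 * z.1 + z.2 * star w.1)

scoped infixl:70 " ⬝ " => omul

/-- The unit `1 = (1,0)`. -/
def oone : SplitOct := (1, 0)

/-- Octonion conjugation `(x,y) ↦ (x̄, -y)`. -/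
def oconj (z : SplitOct) : SplitOct := (star z.1, -z.2)

/-- Real part. -/
def oRe (z : SplitOct) : ℝ := z.1.re

/-- Imaginary part, as a split octonion. -/
def oIm (z : SplitOct) : SplitOct := (z.1 - algebraMap ℝ H' z.1.re, z.2)

/-- Membership in the imaginary split octonions `Im(𝕆')`. -/
def IsIm (z : SplitOct) : Prop := z.1.re = 0

/-- The bilinear form `⟨z,w⟩ = Re (z·w)` on imaginary split octonions. -/
def oin (z w : SplitOct) : ℝ := oRe (z ⬝ w)

/-- The cross product `z × w = Im (z·w)`. -/
def ocross (z w : SplitOct) : SplitOct := oIm (z ⬝ w)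

/-- The quadratic form `q(z) = ⟨z,z⟩`. -/
def q (z : SplitOct) : ℝ := oin z z

def j : SplitOct := ((⟨0,1,0,0⟩ : H'), 0)
def δ' : SplitOct := ((⟨0,0,1,0⟩ : H'), 0)
def ε' : SplitOct := ((⟨0,0,0,1⟩ : H'), 0)
def ℓ' : SplitOct := (0, 1)
def jℓ : SplitOct := (0, (⟨0,1,0,0⟩ : H'))
def δℓ : SplitOct := (0, (⟨0,0,1,0⟩ : H'))
def εℓ : SplitOct := (0, (⟨0,0,0,1⟩ : H'))

end SplitOct

namespace SplitOct

/-- Membership in `Im(ℍ') ⊂ Im(𝕆')`. -/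
def InImH (z : SplitOct) : Prop := z.1.re = 0 ∧ z.2 = 0

/-- Membership in `ℍ'ℓ ⊂ Im(𝕆')`. -/
def InHl (z : SplitOct) : Prop := z.1 = 0

lemma cross_lj : ocross ℓ' jℓ = j := by
  simp only [ocross, omul, oIm, ℓ', jℓ, j]
  ext <;> simp [QuaternionAlgebra.ext_iff]

lemma cross_ld : ocross ℓ' δℓ = δ' := by
  simp only [ocross, omul, oIm, ℓ', δℓ, δ']
  ext <;> simp [QuaternionAlgebra.ext_iff]

lemma cross_le : ocross ℓ' εℓ = ε' := by
  simp only [ocross, omul, oIm, ℓ', εℓ, ε']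
  ext <;> simp [QuaternionAlgebra.ext_iff]

lemma mul_lj : ℓ' ⬝ jℓ = j := by
  simp only [omul, ℓ', jℓ, j]; ext <;> simp

lemma mul_ld : ℓ' ⬝ δℓ = δ' := by
  simp only [omul, ℓ', δℓ, δ']; ext <;> simp

lemma mul_le : ℓ' ⬝ εℓ = ε' := by
  simp only [omul, ℓ', εℓ, ε']; ext <;> simp

lemma oIm_of_im {z : SplitOct} (h : z.1.re = 0) : oIm z = z := by
  simp [oIm, h]

lemma decomp (z : SplitOct) :
    z = z.1.re • oone + z.1.imI • j + z.1.imJ • δ' + z.1.imK • ε' +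
      z.2.re • ℓ' + z.2.imI • jℓ + z.2.imJ • δℓ + z.2.imK • εℓ := by
  ext <;> simp [oone, j, δ', ε', ℓ', jℓ, δℓ, εℓ]

/-- Any automorphism `g` of `𝕆'` preserving the splitting
`Im(𝕆') = Im(ℍ') ⊕ ℍ'ℓ` is uniquely determined by its restriction to `ℍ'ℓ`:
using the identities `j = ℓ × jℓ`, `δ = ℓ × δℓ`, `ε = ℓ × εℓ`, the restriction to
`Im(ℍ')` is recovered as `g j = g ℓ × g(jℓ)`, etc. -/
theorem splitting_automorphism_determined_by_Hl :
    -- the identities j = ℓ × jℓ, δ = ℓ × δℓ, ε = ℓ × εℓ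
    (ocross ℓ' jℓ = j ∧ ocross ℓ' δℓ = δ' ∧ ocross ℓ' εℓ = ε') ∧
    ∀ g : SplitOct ≃ₗ[ℝ] SplitOct,
      (∀ z w : SplitOct, g (z ⬝ w) = g z ⬝ g w) → g oone = oone →
      (∀ z : SplitOct, InImH z → InImH (g z)) →
      (∀ z : SplitOct, InHl z → InHl (g z)) →
      -- the restriction to Im(ℍ') is recovered from the restriction to ℍ'ℓ
      (g j = ocross (g ℓ') (g jℓ) ∧
       g δ' = ocross (g ℓ') (g δℓ) ∧
       g ε' = ocross (g ℓ') (g εℓ)) ∧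
      -- uniqueness: two such automorphisms agreeing on ℍ'ℓ are equal
      (∀ g' : SplitOct ≃ₗ[ℝ] SplitOct,
        (∀ z w : SplitOct, g' (z ⬝ w) = g' z ⬝ g' w) → g' oone = oone →
        (∀ z : SplitOct, InImH z → InImH (g' z)) →
        (∀ z : SplitOct, InHl z → InHl (g' z)) →
        (∀ z : SplitOct, InHl z → g z = g' z) →
        ∀ z : SplitOct, g z = g' z) := by
  refine ⟨⟨cross_lj, cross_ld, cross_le⟩, ?_⟩
  intro g hmul hone hImH hHl
  have key : ∀ a b c : SplitOct, a ⬝ b = c → InImH c → g c = ocross (g a) (g b) := by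
    intro a b c hab hc
    have h1 : (g c).1.re = 0 := (hImH c hc).1
    rw [ocross, ← hmul, hab, oIm_of_im h1]
  have hjIm : InImH j := ⟨rfl, rfl⟩
  have hdIm : InImH δ' := ⟨rfl, rfl⟩
  have heIm : InImH ε' := ⟨rfl, rfl⟩
  have hgj := key _ _ _ mul_lj hjIm
  have hgd := key _ _ _ mul_ld hdIm
  have hge := key _ _ _ mul_le heIm
  refine ⟨⟨hgj, hgd, hge⟩, ?_⟩
  intro g' hmul' hone' hImH' hHl' hagree z
  have hl : g ℓ' = g' ℓ' := hagree ℓ' rfl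
  have hjl : g jℓ = g' jℓ := hagree jℓ rfl
  have hdl : g δℓ = g' δℓ := hagree δℓ rfl
  have hel : g εℓ = g' εℓ := hagree εℓ rfl
  have key' : ∀ a b c : SplitOct, a ⬝ b = c → InImH c → g' c = ocross (g' a) (g' b) := by
    intro a b c hab hc
    have h1 : (g' c).1.re = 0 := (hImH' c hc).1
    rw [ocross, ← hmul', hab, oIm_of_im h1]
  have hj' : g j = g' j := by
    rw [hgj, key' _ _ _ mul_lj hjIm, hl, hjl]
  have hd' : g δ' = g' δ' := by
    rw [hgd, key' _ _ _ mul_ld hdIm, hl, hdl]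
  have he' : g ε' = g' ε' := by
    rw [hge, key' _ _ _ mul_le heIm, hl, hel]
  conv_lhs => rw [decomp z]
  conv_rhs => rw [decomp z]
  simp only [map_add, map_smul, hone, hone', hj', hd', he', hl, hjl, hdl, hel]

end SplitOct
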